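/- Suppose B is a nonvanishing vector field on a 3-manifold with volume form Ω, and set β = ι_B Ω. If B satisfies the Beltrami condition dB♭ = k β with k ≠ 0, then η := k^{−1} B♭ satisfies dη = β and β ∧ η is a nowhere-vanishing 3-form; i.e. η is a contact form. -/
import Mathlib


open Matrix

/-- The standard volume 3-form on `ℝ³` evaluated on three vectors. -/
noncomputable def vol3 (u v w : Fin 3 → ℝ) : ℝ := Matrix.det (Matrix.of ![u, v, w])

/-- Dot product with a fixed vector, as a continuous linear map. -/
noncomputable def dotCLM (v : Fin 3 → ℝ) : (Fin 3 → ℝ) →L[ℝ] ℝ :=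
  LinearMap.toContinuousLinearMap
    { toFun := fun x => x ⬝ᵥ v
      map_add' := fun x y => add_dotProduct x y v
      map_smul' := fun c x => smul_dotProduct c x v }

lemma fderiv_dot (B : (Fin 3 → ℝ) → (Fin 3 → ℝ)) (hB : Differentiable ℝ B)
    (v p u : Fin 3 → ℝ) :
    fderiv ℝ (fun q => B q ⬝ᵥ v) p u = fderiv ℝ B p u ⬝ᵥ v := by
  have h : HasFDerivAt (fun q => B q ⬝ᵥ v) ((dotCLM v).comp (fderiv ℝ B p)) p :=
    ((dotCLM v).hasFDerivAt.comp p (hB p).hasFDerivAt)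
  rw [h.fderiv]; rfl

/-- If the nonvanishing field `B` satisfies the Beltrami condition `dB♭ = k β`
(`β = ι_B Ω`, `k ≠ 0`), then `η := k⁻¹ B♭` satisfies `dη = β`, and
`β ∧ η = k⁻¹ |B|² Ω` is a nowhere-vanishing 3-form: `η` is a contact form. -/
theorem beltrami_is_contact
    (B : (Fin 3 → ℝ) → (Fin 3 → ℝ)) (k : ℝ)
    (hB : Differentiable ℝ B)
    (hBne : ∀ p, B p ≠ 0) (hk : k ≠ 0)
    (hBel : ∀ p u v : Fin 3 → ℝ,
      (fderiv ℝ B p u) ⬝ᵥ v - (fderiv ℝ B p v) ⬝ᵥ u = k * vol3 (B p) u v) :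
    (∀ p u v : Fin 3 → ℝ,
        fderiv ℝ (fun q => k⁻¹ * (B q ⬝ᵥ v)) p u - fderiv ℝ (fun q => k⁻¹ * (B q ⬝ᵥ u)) p v
          = vol3 (B p) u v) ∧
    (∀ p u v w : Fin 3 → ℝ,
        vol3 (B p) u v * (k⁻¹ * (B p ⬝ᵥ w))
          - vol3 (B p) u w * (k⁻¹ * (B p ⬝ᵥ v))
          + vol3 (B p) v w * (k⁻¹ * (B p ⬝ᵥ u))
          = k⁻¹ * (B p ⬝ᵥ B p) * vol3 u v w) ∧
    (∀ p, k⁻¹ * (B p ⬝ᵥ B p) ≠ 0) := by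
  refine ⟨?_, ?_, ?_⟩
  · intro p u v
    have hd : ∀ w : Fin 3 → ℝ, DifferentiableAt ℝ (fun q => B q ⬝ᵥ w) p := fun w =>
      (((dotCLM w).hasFDerivAt.comp p (hB p).hasFDerivAt)).differentiableAt
    rw [fderiv_const_mul (hd v), fderiv_const_mul (hd u)]
    simp only [ContinuousLinearMap.smul_apply, smul_eq_mul]
    rw [fderiv_dot B hB v p u, fderiv_dot B hB u p v, ← mul_sub, hBel p u v,
      inv_mul_cancel_left₀ hk]
  · intro p u v w
    simp only [vol3, Matrix.det_fin_three, dotProduct, Fin.sum_univ_three,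
      Matrix.of_apply, Matrix.cons_val', Matrix.cons_val_zero, Matrix.cons_val_one,
      Matrix.head_cons, Matrix.empty_val', Matrix.cons_val_fin_one, Matrix.head_fin_const,
      Matrix.cons_val_two, Matrix.tail_cons]
    ring
  · intro p
    exact mul_ne_zero (inv_ne_zero hk)
      (fun h => hBne p ((dotProduct_self_eq_zero).mp h))
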